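/- Suppose the horizon satisfies N ≥ n and assumptions (A1), (A2), (A3) hold. Then for every compact set X ⊂ ℝⁿ there exist c_u, δ > 0 such that for every x_t ∈ X with ‖x_t − xˢʳ_lin(x_t)‖₂ ≤ δ, the tracking MPC problem at x_t is feasible and the function V is upper bounded as V(x_t) ≤ c_u‖x_t − xˢʳ_lin(x_t)‖₂²; in fact there exists a feasible point of the tracking MPC problem at x_t whose cost is at most J*_{eq,lin}(x_t) + c_u‖x_t − xˢʳ_lin(x_t)‖₂². -/

import Mathlib

open Matrix

noncomputable section

def en {k : ℕ} (x : Fin k → ℝ) : ℝ := Real.sqrt (∑ i, x i ^ 2)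

def qn {k : ℕ} (P : Matrix (Fin k) (Fin k) ℝ) (x : Fin k → ℝ) : ℝ :=
  x ⬝ᵥ P.mulVec x

def jac {n q : ℕ} (g : (Fin n → ℝ) → Fin q → ℝ) (xt : Fin n → ℝ) :
    Matrix (Fin q) (Fin n) ℝ :=
  LinearMap.toMatrix' (fderiv ℝ g xt).toLinearMap

def fdyn {n m : ℕ} (f0 : (Fin n → ℝ) → Fin n → ℝ) (B : Matrix (Fin n) (Fin m) ℝ)
    (x : Fin n → ℝ) (u : Fin m → ℝ) : Fin n → ℝ :=
  f0 x + B.mulVec u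

def hout {n p m : ℕ} (h0 : (Fin n → ℝ) → Fin p → ℝ) (D : Matrix (Fin p) (Fin m) ℝ)
    (x : Fin n → ℝ) (u : Fin m → ℝ) : Fin p → ℝ :=
  h0 x + D.mulVec u

def flin {n m : ℕ} (f0 : (Fin n → ℝ) → Fin n → ℝ) (B : Matrix (Fin n) (Fin m) ℝ)
    (xt x : Fin n → ℝ) (u : Fin m → ℝ) : Fin n → ℝ :=
  (jac f0 xt).mulVec x + B.mulVec u + (f0 xt - (jac f0 xt).mulVec xt)

def hlin {n p m : ℕ} (h0 : (Fin n → ℝ) → Fin p → ℝ) (D : Matrix (Fin p) (Fin m) ℝ)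
    (xt x : Fin n → ℝ) (u : Fin m → ℝ) : Fin p → ℝ :=
  (jac h0 xt).mulVec x + D.mulVec u + (h0 xt - (jac h0 xt).mulVec xt)

def Zlin {n m : ℕ} (f0 : (Fin n → ℝ) → Fin n → ℝ) (B : Matrix (Fin n) (Fin m) ℝ)
    (Us : Set (Fin m → ℝ)) (xt : Fin n → ℝ) : Set ((Fin n → ℝ) × (Fin m → ℝ)) :=
  {z | z.2 ∈ Us ∧ z.1 = flin f0 B xt z.1 z.2}

def Zs {n m : ℕ} (f0 : (Fin n → ℝ) → Fin n → ℝ) (B : Matrix (Fin n) (Fin m) ℝ)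
    (Us : Set (Fin m → ℝ)) : Set ((Fin n → ℝ) × (Fin m → ℝ)) :=
  {z | z.2 ∈ Us ∧ z.1 = fdyn f0 B z.1 z.2}

def A2holds {n m p : ℕ} (f0 : (Fin n → ℝ) → Fin n → ℝ) (h0 : (Fin n → ℝ) → Fin p → ℝ)
    (B : Matrix (Fin n) (Fin m) ℝ) (D : Matrix (Fin p) (Fin m) ℝ) (σs : ℝ) : Prop :=
  ∀ (xt v : Fin n → ℝ) (w : Fin m → ℝ),
    σs * Real.sqrt (en v ^ 2 + en w ^ 2) ≤
      Real.sqrt (en ((jac f0 xt).mulVec v - v + B.mulVec w) ^ 2 +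
        en ((jac h0 xt).mulVec v + D.mulVec w) ^ 2)

def A3holds {n m : ℕ} (f0 : (Fin n → ℝ) → Fin n → ℝ) (B : Matrix (Fin n) (Fin m) ℝ)
    (μ : ℝ) : Prop :=
  ∀ (xt w : Fin n → ℝ),
    μ * en w ≤ Real.sqrt (∑ k ∈ Finset.range n, en ((jac f0 xt ^ k * B)ᵀ.mulVec w) ^ 2)

def A4holds {n : ℕ} (f0 : (Fin n → ℝ) → Fin n → ℝ) (σl : ℝ) : Prop :=
  ∀ xt v : Fin n → ℝ, σl * en v ≤ en (v - (jac f0 xt).mulVec v)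
def Jeqlin {n m p : ℕ} (f0 : (Fin n → ℝ) → Fin n → ℝ) (h0 : (Fin n → ℝ) → Fin p → ℝ)
    (B : Matrix (Fin n) (Fin m) ℝ) (D : Matrix (Fin p) (Fin m) ℝ)
    (Us : Set (Fin m → ℝ)) (S : Matrix (Fin p) (Fin p) ℝ) (yr : Fin p → ℝ)
    (xt : Fin n → ℝ) : ℝ :=
  sInf {c : ℝ | ∃ z ∈ Zlin f0 B Us xt, c = qn S (hlin h0 D xt z.1 z.2 - yr)}

def MPCfeas {n m p : ℕ} (f0 : (Fin n → ℝ) → Fin n → ℝ) (h0 : (Fin n → ℝ) → Fin p → ℝ)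
    (B : Matrix (Fin n) (Fin m) ℝ) (D : Matrix (Fin p) (Fin m) ℝ)
    (U Us : Set (Fin m → ℝ)) (N : ℕ) (xt : Fin n → ℝ)
    (xb : ℕ → Fin n → ℝ) (ub : ℕ → Fin m → ℝ)
    (xs : Fin n → ℝ) (us : Fin m → ℝ) (ys : Fin p → ℝ) : Prop :=
  (∀ k < N, xb (k + 1) = flin f0 B xt (xb k) (ub k)) ∧
  xb 0 = xt ∧ xb N = xs ∧ (∀ k < N, ub k ∈ U) ∧
  (xs, us) ∈ Zlin f0 B Us xt ∧ ys = hlin h0 D xt xs us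

def MPCcost {n m p : ℕ} (Q : Matrix (Fin n) (Fin n) ℝ) (R : Matrix (Fin m) (Fin m) ℝ)
    (S : Matrix (Fin p) (Fin p) ℝ) (yr : Fin p → ℝ) (N : ℕ)
    (xb : ℕ → Fin n → ℝ) (ub : ℕ → Fin m → ℝ)
    (xs : Fin n → ℝ) (us : Fin m → ℝ) (ys : Fin p → ℝ) : ℝ :=
  (∑ k ∈ Finset.range N, (qn Q (xb k - xs) + qn R (ub k - us))) + qn S (ys - yr)

def Jstar {n m p : ℕ} (f0 : (Fin n → ℝ) → Fin n → ℝ) (h0 : (Fin n → ℝ) → Fin p → ℝ)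
    (B : Matrix (Fin n) (Fin m) ℝ) (D : Matrix (Fin p) (Fin m) ℝ)
    (U Us : Set (Fin m → ℝ)) (Q : Matrix (Fin n) (Fin n) ℝ) (R : Matrix (Fin m) (Fin m) ℝ)
    (S : Matrix (Fin p) (Fin p) ℝ) (yr : Fin p → ℝ) (N : ℕ) (xt : Fin n → ℝ) : ℝ :=
  sInf {c : ℝ | ∃ xb ub xs us ys, MPCfeas f0 h0 B D U Us N xt xb ub xs us ys ∧
    c = MPCcost Q R S yr N xb ub xs us ys}

def Vfun {n m p : ℕ} (f0 : (Fin n → ℝ) → Fin n → ℝ) (h0 : (Fin n → ℝ) → Fin p → ℝ)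
    (B : Matrix (Fin n) (Fin m) ℝ) (D : Matrix (Fin p) (Fin m) ℝ)
    (U Us : Set (Fin m → ℝ)) (Q : Matrix (Fin n) (Fin n) ℝ) (R : Matrix (Fin m) (Fin m) ℝ)
    (S : Matrix (Fin p) (Fin p) ℝ) (yr : Fin p → ℝ) (N : ℕ) (xt : Fin n → ℝ) : ℝ :=
  Jstar f0 h0 B D U Us Q R S yr N xt - Jeqlin f0 h0 B D Us S yr xt

def MPCfeasible {n m p : ℕ} (f0 : (Fin n → ℝ) → Fin n → ℝ) (h0 : (Fin n → ℝ) → Fin p → ℝ)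
    (B : Matrix (Fin n) (Fin m) ℝ) (D : Matrix (Fin p) (Fin m) ℝ)
    (U Us : Set (Fin m → ℝ)) (N : ℕ) (xt : Fin n → ℝ) : Prop :=
  ∃ xb ub xs us ys, MPCfeas f0 h0 B D U Us N xt xb ub xs us ys

def MPCopt {n m p : ℕ} (f0 : (Fin n → ℝ) → Fin n → ℝ) (h0 : (Fin n → ℝ) → Fin p → ℝ)
    (B : Matrix (Fin n) (Fin m) ℝ) (D : Matrix (Fin p) (Fin m) ℝ)
    (U Us : Set (Fin m → ℝ)) (Q : Matrix (Fin n) (Fin n) ℝ) (R : Matrix (Fin m) (Fin m) ℝ)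
    (S : Matrix (Fin p) (Fin p) ℝ) (yr : Fin p → ℝ) (N : ℕ) (xt : Fin n → ℝ)
    (xb : ℕ → Fin n → ℝ) (ub : ℕ → Fin m → ℝ)
    (xs : Fin n → ℝ) (us : Fin m → ℝ) (ys : Fin p → ℝ) : Prop :=
  MPCfeas f0 h0 B D U Us N xt xb ub xs us ys ∧
  ∀ xb' ub' xs' us' ys', MPCfeas f0 h0 B D U Us N xt xb' ub' xs' us' ys' →
    MPCcost Q R S yr N xb ub xs us ys ≤ MPCcost Q R S yr N xb' ub' xs' us' ys'

def rollout {n m : ℕ} (f0 : (Fin n → ℝ) → Fin n → ℝ) (B : Matrix (Fin n) (Fin m) ℝ)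
    (x0 : Fin n → ℝ) (u : ℕ → Fin m → ℝ) : ℕ → Fin n → ℝ
  | 0 => x0
  | k + 1 => fdyn f0 B (rollout f0 B x0 u k) (u k)

/-! The tracking problem at `x_t` is linear, so a feasible candidate is the optimal steady state
`(xˢʳ_lin, uˢʳ_lin)` plus a deviation of the linearization `ξ⁺ = A ξ + B v`. Uniform
controllability (A3) makes the controllability Gramian `W` of `(A_{x_t}, B)` satisfy `W ≥ μ² I`,
so the minimum-energy input `v_k = (A^{n-1-k} B)ᵀ W⁻¹ (-Aⁿ ξ₀)` steers `ξ₀ = x_t - xˢʳ_lin` to `0`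
in `n ≤ N` steps, with `‖v_k‖` and `‖ξ_k‖` linear in `‖ξ₀‖`; the constants depend only on a bound
for `‖Df₀‖` on the compact set `X`. Since `𝕌ˢ` is a compact subset of `int 𝕌`, a small `‖ξ₀‖`
keeps `uˢʳ_lin + v_k` in `𝕌`. The stage costs are then `O(‖ξ₀‖²)`, and the terminal cost is
exactly `J*_{eq,lin}(x_t)`. -/

open scoped Matrix.Norms.L2Operator

section EuclideanNorm

variable {k q r : ℕ}

theorem en_eq_norm (x : Fin k → ℝ) : en x = ‖WithLp.toLp 2 x‖ := by
  simp [en, EuclideanSpace.norm_eq]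

theorem en_nonneg (x : Fin k → ℝ) : 0 ≤ en x := Real.sqrt_nonneg _

theorem en_eq_zero {x : Fin k → ℝ} : en x = 0 ↔ x = 0 := by
  rw [en_eq_norm, norm_eq_zero, WithLp.toLp_eq_zero]

theorem en_neg (x : Fin k → ℝ) : en (-x) = en x := by
  rw [en_eq_norm, en_eq_norm, WithLp.toLp_neg, norm_neg]

theorem en_add_le (x y : Fin k → ℝ) : en (x + y) ≤ en x + en y := by
  simpa only [en_eq_norm, WithLp.toLp_add] using norm_add_le _ _

theorem norm_le_en (x : Fin k → ℝ) : ‖x‖ ≤ en x :=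
  pi_norm_le_iff_of_nonneg (en_nonneg x) |>.2 fun i => by
    simpa [en_eq_norm] using PiLp.norm_apply_le (WithLp.toLp 2 x) i

theorem dotProduct_self_eq_en_sq (x : Fin k → ℝ) : x ⬝ᵥ x = en x ^ 2 := by
  rw [en_eq_norm, ← real_inner_self_eq_norm_sq, EuclideanSpace.inner_eq_star_dotProduct]
  simp

theorem dotProduct_le_en_mul_en (x y : Fin k → ℝ) : x ⬝ᵥ y ≤ en x * en y := by
  have := real_inner_le_norm (WithLp.toLp 2 y) (WithLp.toLp 2 x)
  simpa [EuclideanSpace.inner_eq_star_dotProduct, en_eq_norm, mul_comm] using this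

theorem en_mulVec_le (A : Matrix (Fin q) (Fin r) ℝ) (v : Fin r → ℝ) :
    en (A *ᵥ v) ≤ ‖A‖ * en v := by
  simpa [en_eq_norm] using A.l2_opNorm_mulVec (WithLp.toLp 2 v)

theorem l2_opNorm_transpose (A : Matrix (Fin q) (Fin r) ℝ) : ‖Aᵀ‖ = ‖A‖ := by
  rw [← Matrix.conjTranspose_eq_transpose_of_trivial, Matrix.l2_opNorm_conjTranspose]

theorem en_pow_mulVec_le {A : Matrix (Fin k) (Fin k) ℝ} {a : ℝ} (hA : ‖A‖ ≤ a) (j : ℕ)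
    (v : Fin k → ℝ) : en (A ^ j *ᵥ v) ≤ a ^ j * en v := by
  induction j with
  | zero => simp
  | succ j ih =>
    calc en (A ^ (j + 1) *ᵥ v) = en (A *ᵥ (A ^ j *ᵥ v)) := by
          rw [pow_succ', Matrix.mulVec_mulVec]
      _ ≤ a * (a ^ j * en v) :=
          (en_mulVec_le _ _).trans (mul_le_mul hA ih (en_nonneg _) ((norm_nonneg _).trans hA))
      _ = a ^ (j + 1) * en v := by ring

theorem qn_le (P : Matrix (Fin k) (Fin k) ℝ) (x : Fin k → ℝ) : qn P x ≤ ‖P‖ * en x ^ 2 :=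
  calc qn P x ≤ en x * en (P *ᵥ x) := dotProduct_le_en_mul_en _ _
    _ ≤ en x * (‖P‖ * en x) := mul_le_mul_of_nonneg_left (en_mulVec_le P x) (en_nonneg x)
    _ = ‖P‖ * en x ^ 2 := by ring

theorem qn_nonneg {P : Matrix (Fin k) (Fin k) ℝ} (hP : P.PosSemidef) (x : Fin k → ℝ) :
    0 ≤ qn P x := by
  simpa [qn] using hP.dotProduct_mulVec_nonneg x

theorem sum_qn_add_qn_le {n m N : ℕ} (Q : Matrix (Fin n) (Fin n) ℝ) (R : Matrix (Fin m) (Fin m) ℝ)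
    {ξ : ℕ → Fin n → ℝ} {v : ℕ → Fin m → ℝ} {K c e : ℝ}
    (hξ : ∀ k < N, en (ξ k) ≤ K * e) (hv : ∀ k < N, en (v k) ≤ c * e) :
    ∑ k ∈ Finset.range N, (qn Q (ξ k) + qn R (v k)) ≤ N * (‖Q‖ * K ^ 2 + ‖R‖ * c ^ 2) * e ^ 2 := by
  have hterm : ∀ k ∈ Finset.range N,
      qn Q (ξ k) + qn R (v k) ≤ (‖Q‖ * K ^ 2 + ‖R‖ * c ^ 2) * e ^ 2 := fun k hk => by
    have hk := Finset.mem_range.1 hk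
    have hξ2 := pow_le_pow_left₀ (en_nonneg _) (hξ k hk) 2
    have hv2 := pow_le_pow_left₀ (en_nonneg _) (hv k hk) 2
    calc qn Q (ξ k) + qn R (v k) ≤ ‖Q‖ * en (ξ k) ^ 2 + ‖R‖ * en (v k) ^ 2 :=
          add_le_add (qn_le _ _) (qn_le _ _)
      _ ≤ ‖Q‖ * (K * e) ^ 2 + ‖R‖ * (c * e) ^ 2 := by gcongr
      _ = (‖Q‖ * K ^ 2 + ‖R‖ * c ^ 2) * e ^ 2 := by ring
  simpa [mul_assoc] using Finset.sum_le_card_nsmul _ _ _ hterm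

end EuclideanNorm

theorem continuous_jac {n q : ℕ} {g : (Fin n → ℝ) → Fin q → ℝ} (hg : ContDiff ℝ 1 g) :
    Continuous (jac g) := by
  have hg' := hg.continuous_fderiv one_ne_zero
  refine continuous_pi fun i => continuous_pi fun j => ?_
  simp only [jac, LinearMap.toMatrix'_apply, ContinuousLinearMap.coe_coe]
  fun_prop

theorem exists_mulVec_eq_of_coercive {n : ℕ} {W : Matrix (Fin n) (Fin n) ℝ} {c : ℝ} (hc : 0 < c)
    (hW : ∀ w, c * en w ^ 2 ≤ w ⬝ᵥ W *ᵥ w) (z : Fin n → ℝ) :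
    ∃ w, W *ᵥ w = z ∧ en w ≤ en z / c := by
  have hinj : Function.Injective W.mulVec := fun x y hxy => by
    have h := hW (x - y)
    rw [Matrix.mulVec_sub, hxy, sub_self, dotProduct_zero] at h
    have hsq : en (x - y) ^ 2 = 0 :=
      le_antisymm (le_of_mul_le_mul_left (by simpa using h) hc) (sq_nonneg _)
    exact sub_eq_zero.1 (en_eq_zero.1 (pow_eq_zero_iff two_ne_zero |>.1 hsq))
  obtain ⟨w, rfl⟩ := Matrix.mulVec_surjective_iff_isUnit.2
    (Matrix.mulVec_injective_iff_isUnit.1 hinj) z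
  refine ⟨w, rfl, (le_div_iff₀ hc).2 ?_⟩
  have h := (hW w).trans (dotProduct_le_en_mul_en w (W *ᵥ w))
  rcases (en_nonneg w).eq_or_lt with h0 | hpos
  · rw [← h0, zero_mul]; exact en_nonneg _
  · nlinarith

section Controllability

variable {n m : ℕ} (A : Matrix (Fin n) (Fin n) ℝ) (B : Matrix (Fin n) (Fin m) ℝ)

def ctrbGramian : Matrix (Fin n) (Fin n) ℝ :=
  ∑ k ∈ Finset.range n, (A ^ k * B) * (A ^ k * B)ᵀ

theorem dotProduct_ctrbGramian_mulVec (w : Fin n → ℝ) :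
    w ⬝ᵥ ctrbGramian A B *ᵥ w = ∑ k ∈ Finset.range n, en ((A ^ k * B)ᵀ *ᵥ w) ^ 2 := by
  rw [ctrbGramian, Matrix.sum_mulVec, dotProduct_sum]
  refine Finset.sum_congr rfl fun k _ => ?_
  rw [← Matrix.mulVec_mulVec, Matrix.dotProduct_mulVec, ← Matrix.mulVec_transpose,
    dotProduct_self_eq_en_sq]

def linTraj (x0 : Fin n → ℝ) (v : ℕ → Fin m → ℝ) : ℕ → Fin n → ℝ
  | 0 => x0
  | k + 1 => A *ᵥ linTraj x0 v k + B *ᵥ v k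

theorem linTraj_eq_sum (x0 : Fin n → ℝ) (v : ℕ → Fin m → ℝ) (k : ℕ) :
    linTraj A B x0 v k =
      A ^ k *ᵥ x0 + ∑ j ∈ Finset.range k, (A ^ (k - 1 - j) * B) *ᵥ v j := by
  induction k with
  | zero => simp [linTraj]
  | succ k ih =>
    have hshift : ∀ j ∈ Finset.range k,
        A *ᵥ ((A ^ (k - 1 - j) * B) *ᵥ v j) = (A ^ (k - j) * B) *ᵥ v j := by
      intro j hj
      rw [Matrix.mulVec_mulVec, ← Matrix.mul_assoc, ← pow_succ',
        show k - 1 - j + 1 = k - j by have := Finset.mem_range.1 hj; omega]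
    rw [linTraj, ih, Matrix.mulVec_add, Matrix.mulVec_sum, Finset.sum_congr rfl hshift,
      Matrix.mulVec_mulVec, ← pow_succ', Finset.sum_range_succ]
    simp [add_assoc]

def deadbeatInput (w : Fin n → ℝ) (k : ℕ) : Fin m → ℝ :=
  if k < n then (A ^ (n - 1 - k) * B)ᵀ *ᵥ w else 0

theorem linTraj_deadbeatInput (x0 w : Fin n → ℝ) :
    linTraj A B x0 (deadbeatInput A B w) n = A ^ n *ᵥ x0 + ctrbGramian A B *ᵥ w := by
  rw [linTraj_eq_sum, ctrbGramian, Matrix.sum_mulVec,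
    ← Finset.sum_range_reflect (fun k => ((A ^ k * B) * (A ^ k * B)ᵀ) *ᵥ w)]
  refine congrArg _ (Finset.sum_congr rfl fun j hj => ?_)
  rw [deadbeatInput, if_pos (Finset.mem_range.1 hj), Matrix.mulVec_mulVec]

theorem linTraj_eq_zero_of_le {x0 : Fin n → ℝ} {v : ℕ → Fin m → ℝ} {N : ℕ}
    (hN : linTraj A B x0 v N = 0) (hv : ∀ k, N ≤ k → v k = 0) :
    ∀ k, N ≤ k → linTraj A B x0 v k = 0 := by
  refine Nat.le_induction hN fun k hk ih => ?_
  rw [linTraj, ih, hv k hk, Matrix.mulVec_zero, Matrix.mulVec_zero, add_zero]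

theorem en_deadbeatInput_le {a : ℝ} (ha : ‖A‖ ≤ a) (ha1 : 1 ≤ a) (w : Fin n → ℝ) (k : ℕ) :
    en (deadbeatInput A B w k) ≤ ‖B‖ * a ^ n * en w := by
  unfold deadbeatInput
  split_ifs with hk
  · rw [Matrix.transpose_mul, Matrix.transpose_pow, ← Matrix.mulVec_mulVec]
    calc en (Bᵀ *ᵥ (Aᵀ ^ (n - 1 - k) *ᵥ w))
        ≤ ‖B‖ * (a ^ (n - 1 - k) * en w) := by
          rw [← l2_opNorm_transpose B]
          exact (en_mulVec_le _ _).trans <| mul_le_mul_of_nonneg_left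
            (en_pow_mulVec_le ((l2_opNorm_transpose A).trans_le ha) _ _) (norm_nonneg _)
      _ ≤ ‖B‖ * a ^ n * en w := by
          rw [← mul_assoc]
          exact mul_le_mul_of_nonneg_right (mul_le_mul_of_nonneg_left
            (pow_le_pow_right₀ ha1 (by omega)) (norm_nonneg _)) (en_nonneg w)
  · rw [en_eq_zero.2 rfl]
    exact mul_nonneg (mul_nonneg (norm_nonneg _) (pow_nonneg (by linarith) _)) (en_nonneg w)

theorem en_linTraj_le {a c : ℝ} (ha : ‖A‖ ≤ a) (hc : 0 ≤ c) {x0 : Fin n → ℝ}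
    {v : ℕ → Fin m → ℝ} (hv : ∀ k, en (v k) ≤ c * en x0) (k : ℕ) :
    en (linTraj A B x0 v k) ≤ (1 + a + ‖B‖ * c) ^ k * en x0 := by
  set E := 1 + a + ‖B‖ * c
  have ha0 : 0 ≤ a := (norm_nonneg A).trans ha
  have hBc : 0 ≤ ‖B‖ * c := mul_nonneg (norm_nonneg B) hc
  induction k with
  | zero => simp [linTraj]
  | succ k ih =>
    have hx0 : en x0 ≤ E ^ k * en x0 :=
      le_mul_of_one_le_left (en_nonneg x0) (one_le_pow₀ (by linarith))
    calc en (linTraj A B x0 v (k + 1))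
        ≤ a * en (linTraj A B x0 v k) + ‖B‖ * (c * en x0) :=
          (en_add_le _ _).trans (add_le_add
            ((en_mulVec_le _ _).trans (mul_le_mul_of_nonneg_right ha (en_nonneg _)))
            ((en_mulVec_le _ _).trans (mul_le_mul_of_nonneg_left (hv k) (norm_nonneg B))))
      _ ≤ a * (E ^ k * en x0) + ‖B‖ * c * (E ^ k * en x0) := by
          rw [← mul_assoc ‖B‖]
          exact add_le_add (mul_le_mul_of_nonneg_left ih ha0) (mul_le_mul_of_nonneg_left hx0 hBc)
      _ ≤ E ^ (k + 1) * en x0 := by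
          rw [← add_mul, pow_succ', mul_assoc]
          exact mul_le_mul_of_nonneg_right (by linarith)
            (mul_nonneg (pow_nonneg (by linarith) _) (en_nonneg _))

theorem exists_input_linTraj_eq_zero {μ a : ℝ} (hμ : 0 < μ)
    (hctrb : ∀ w, μ * en w ≤ Real.sqrt (∑ k ∈ Finset.range n, en ((A ^ k * B)ᵀ *ᵥ w) ^ 2))
    (ha : ‖A‖ ≤ a) (ha1 : 1 ≤ a) (x0 : Fin n → ℝ) :
    ∃ v : ℕ → Fin m → ℝ, (∀ k, en (v k) ≤ ‖B‖ * a ^ (2 * n) / μ ^ 2 * en x0) ∧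
      ∀ k, n ≤ k → linTraj A B x0 v k = 0 := by
  have hW : ∀ w, μ ^ 2 * en w ^ 2 ≤ w ⬝ᵥ ctrbGramian A B *ᵥ w := fun w => by
    rw [dotProduct_ctrbGramian_mulVec, ← mul_pow]
    exact (Real.le_sqrt (by positivity [en_nonneg w]) (by positivity)).1 (hctrb w)
  obtain ⟨w, hw, hwle⟩ := exists_mulVec_eq_of_coercive (by positivity) hW (-(A ^ n *ᵥ x0))
  refine ⟨deadbeatInput A B w, fun k => ?_, linTraj_eq_zero_of_le A B ?_ fun k hk => ?_⟩
  · rw [en_neg] at hwle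
    calc en (deadbeatInput A B w k) ≤ ‖B‖ * a ^ n * en w := en_deadbeatInput_le A B ha ha1 w k
      _ ≤ ‖B‖ * a ^ n * (a ^ n * en x0 / μ ^ 2) := by
          refine mul_le_mul_of_nonneg_left (hwle.trans ?_) (by positivity)
          exact div_le_div_of_nonneg_right (en_pow_mulVec_le ha n x0) (by positivity)
      _ = ‖B‖ * a ^ (2 * n) / μ ^ 2 * en x0 := by ring
  · rw [linTraj_deadbeatInput, hw, add_neg_cancel]
  · simp [deadbeatInput, not_lt.2 hk]

end Controllability

theorem exists_pos_add_mem_of_subset_interior {E : Type*} [SeminormedAddCommGroup E]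
    {K U : Set E} (hK : IsCompact K) (hKU : K ⊆ interior U) :
    ∃ ε > 0, ∀ u ∈ K, ∀ v, ‖v‖ < ε → u + v ∈ U := by
  obtain ⟨ε, hε, hthick⟩ := hK.exists_thickening_subset_open isOpen_interior hKU
  refine ⟨ε, hε, fun u hu v hv => interior_subset (hthick ?_)⟩
  exact Metric.mem_thickening_iff.2 ⟨u, hu, by rwa [dist_eq_norm, add_sub_cancel_left]⟩

section TrackingMPC

variable {n m p : ℕ} {f0 : (Fin n → ℝ) → Fin n → ℝ} {h0 : (Fin n → ℝ) → Fin p → ℝ}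
  {B : Matrix (Fin n) (Fin m) ℝ} {D : Matrix (Fin p) (Fin m) ℝ} {U Us : Set (Fin m → ℝ)}
  {Q : Matrix (Fin n) (Fin n) ℝ} {R : Matrix (Fin m) (Fin m) ℝ} {S : Matrix (Fin p) (Fin p) ℝ}
  {yr : Fin p → ℝ} {N : ℕ} {xt : Fin n → ℝ}

theorem Jeqlin_eq_of_forall_le {xs : Fin n → ℝ} {us : Fin m → ℝ} (hz : (xs, us) ∈ Zlin f0 B Us xt)
    (hopt : ∀ z ∈ Zlin f0 B Us xt,
      qn S (hlin h0 D xt xs us - yr) ≤ qn S (hlin h0 D xt z.1 z.2 - yr)) :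
    Jeqlin f0 h0 B D Us S yr xt = qn S (hlin h0 D xt xs us - yr) :=
  IsLeast.csInf_eq ⟨⟨_, hz, rfl⟩, by rintro c ⟨z, hz', rfl⟩; exact hopt z hz'⟩

theorem Jstar_le_MPCcost (hQ : Q.PosSemidef) (hR : R.PosSemidef) (hS : S.PosSemidef)
    {xb : ℕ → Fin n → ℝ} {ub : ℕ → Fin m → ℝ} {xs : Fin n → ℝ} {us : Fin m → ℝ}
    {ys : Fin p → ℝ} (hfeas : MPCfeas f0 h0 B D U Us N xt xb ub xs us ys) :
    Jstar f0 h0 B D U Us Q R S yr N xt ≤ MPCcost Q R S yr N xb ub xs us ys := by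
  refine csInf_le ⟨0, ?_⟩ ⟨xb, ub, xs, us, ys, hfeas, rfl⟩
  rintro c ⟨-, -, -, -, -, -, rfl⟩
  exact add_nonneg (Finset.sum_nonneg fun k _ => add_nonneg (qn_nonneg hQ _) (qn_nonneg hR _))
    (qn_nonneg hS _)

theorem exists_MPCfeas_of_linTraj {xs : Fin n → ℝ} {us : Fin m → ℝ}
    (hz : (xs, us) ∈ Zlin f0 B Us xt) {v : ℕ → Fin m → ℝ} (hU : ∀ k < N, us + v k ∈ U)
    (hN : linTraj (jac f0 xt) B (xt - xs) v N = 0) :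
    ∃ xb ub, MPCfeas f0 h0 B D U Us N xt xb ub xs us (hlin h0 D xt xs us) ∧
      MPCcost Q R S yr N xb ub xs us (hlin h0 D xt xs us) =
        ∑ k ∈ Finset.range N, (qn Q (linTraj (jac f0 xt) B (xt - xs) v k) + qn R (v k)) +
          qn S (hlin h0 D xt xs us - yr) := by
  refine ⟨fun k => xs + linTraj (jac f0 xt) B (xt - xs) v k, fun k => us + v k,
    ⟨fun k _ => ?_, by simp [linTraj], by simp [hN], hU, hz, rfl⟩, by simp [MPCcost]⟩
  have hs : xs = flin f0 B xt xs us := hz.2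
  simp only [flin] at hs ⊢
  rw [linTraj, Matrix.mulVec_add, Matrix.mulVec_add]
  nth_rewrite 1 [hs]
  abel

end TrackingMPC

theorem stmt4_general {n m p : ℕ} (N : ℕ) (hN : n ≤ N)
    (f0 : (Fin n → ℝ) → Fin n → ℝ) (h0 : (Fin n → ℝ) → Fin p → ℝ)
    (B : Matrix (Fin n) (Fin m) ℝ) (D : Matrix (Fin p) (Fin m) ℝ)
    (U Us : Set (Fin m → ℝ)) (yr : Fin p → ℝ)
    (Q : Matrix (Fin n) (Fin n) ℝ) (R : Matrix (Fin m) (Fin m) ℝ)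
    (S : Matrix (Fin p) (Fin p) ℝ)
    (hUs : IsCompact Us)
    (hUsint : Us ⊆ interior U)
    (hQ : Q.PosDef) (hR : R.PosDef) (hS : S.PosDef)
    (hf0 : ContDiff ℝ 2 f0)
    (μ : ℝ) (hμ : 0 < μ) (hA3 : A3holds f0 B μ)
    -- optimal reachable steady state of the linearization at each point
    (xsrlin : (Fin n → ℝ) → Fin n → ℝ) (usrlin : (Fin n → ℝ) → Fin m → ℝ)
    (hxsrlin : ∀ xt : Fin n → ℝ, (xsrlin xt, usrlin xt) ∈ Zlin f0 B Us xt ∧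
      ∀ z ∈ Zlin f0 B Us xt,
        qn S (hlin h0 D xt (xsrlin xt) (usrlin xt) - yr) ≤
          qn S (hlin h0 D xt z.1 z.2 - yr)) :
    ∀ X : Set (Fin n → ℝ), IsCompact X →
      ∃ cu δ : ℝ, 0 < cu ∧ 0 < δ ∧
        ∀ xt ∈ X, en (xt - xsrlin xt) ≤ δ →
          MPCfeasible f0 h0 B D U Us N xt ∧
          Vfun f0 h0 B D U Us Q R S yr N xt ≤ cu * en (xt - xsrlin xt) ^ 2 ∧
          ∃ (xb : ℕ → Fin n → ℝ) (ub : ℕ → Fin m → ℝ) (xs : Fin n → ℝ)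
            (us : Fin m → ℝ) (ys : Fin p → ℝ),
            MPCfeas f0 h0 B D U Us N xt xb ub xs us ys ∧
            MPCcost Q R S yr N xb ub xs us ys ≤
              Jeqlin f0 h0 B D Us S yr xt + cu * en (xt - xsrlin xt) ^ 2 := by
  intro X hX
  obtain ⟨C, hC⟩ :=
    hX.exists_bound_of_continuousOn (continuous_jac (hf0.of_le (by norm_num))).continuousOn
  obtain ⟨ε, hε, hUadd⟩ := exists_pos_add_mem_of_subset_interior hUs hUsint
  set a := max 1 C
  set c := ‖B‖ * a ^ (2 * n) / μ ^ 2
  set E := 1 + a + ‖B‖ * c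
  have ha1 : 1 ≤ a := le_max_left _ _
  have hc : 0 ≤ c := by positivity
  have hE1 : 1 ≤ E := by linarith [mul_nonneg (norm_nonneg B) hc]
  refine ⟨N * (‖Q‖ * (E ^ N) ^ 2 + ‖R‖ * c ^ 2) + 1, ε / (c + 1), by positivity, by positivity,
    fun xt hxt hδ => ?_⟩
  obtain ⟨hz, hopt⟩ := hxsrlin xt
  have ha : ‖jac f0 xt‖ ≤ a := (hC xt hxt).trans (le_max_right _ _)
  obtain ⟨v, hv, hv0⟩ := exists_input_linTraj_eq_zero _ B hμ (hA3 xt) ha ha1 (xt - xsrlin xt)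
  have hsmall : ∀ k, ‖v k‖ < ε := fun k =>
    calc ‖v k‖ ≤ c * en (xt - xsrlin xt) := (norm_le_en _).trans (hv k)
      _ ≤ c * (ε / (c + 1)) := mul_le_mul_of_nonneg_left hδ hc
      _ < ε := by rw [mul_div_assoc', div_lt_iff₀ (by positivity)]; nlinarith
  obtain ⟨xb, ub, hfeas, hcost⟩ := exists_MPCfeas_of_linTraj (h0 := h0) (D := D) (Q := Q)
    (R := R) (S := S) (yr := yr) hz (fun k _ => hUadd _ hz.1 _ (hsmall k)) (hv0 N hN)
  have hsum := sum_qn_add_qn_le (N := N) (K := E ^ N) Q R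
    (fun k hk => (en_linTraj_le _ B ha hc hv k).trans
      (mul_le_mul_of_nonneg_right (pow_le_pow_right₀ hE1 hk.le) (en_nonneg _)))
    (fun k _ => hv k)
  rw [← Jeqlin_eq_of_forall_le hz hopt] at hcost
  have he := sq_nonneg (en (xt - xsrlin xt))
  refine ⟨⟨_, _, _, _, _, hfeas⟩, ?_, ⟨_, _, _, _, _, hfeas, by linarith⟩⟩
  have := Jstar_le_MPCcost (yr := yr) hQ.posSemidef hR.posSemidef hS.posSemidef hfeas
  unfold Vfun
  linarith

/-- Lemma 1 (ii): local upper bound on the Lyapunov function candidate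
`V(x_t) = J*_N(x_t) − J*_{eq,lin}(x_t)`: on every compact set `X` there are
`c_u, δ > 0` such that every `x_t ∈ X` with `‖x_t − xˢʳ_lin(x_t)‖₂ ≤ δ` is
feasible and `V(x_t) ≤ c_u ‖x_t − xˢʳ_lin(x_t)‖₂²`; in fact some feasible point
has cost at most `J*_{eq,lin}(x_t) + c_u ‖x_t − xˢʳ_lin(x_t)‖₂²`. -/
theorem stmt4 {n m p : ℕ} (N : ℕ) (hN : n ≤ N)
    (f0 : (Fin n → ℝ) → Fin n → ℝ) (h0 : (Fin n → ℝ) → Fin p → ℝ)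
    (B : Matrix (Fin n) (Fin m) ℝ) (D : Matrix (Fin p) (Fin m) ℝ)
    (U Us : Set (Fin m → ℝ)) (yr : Fin p → ℝ)
    (Q : Matrix (Fin n) (Fin n) ℝ) (R : Matrix (Fin m) (Fin m) ℝ)
    (S : Matrix (Fin p) (Fin p) ℝ)
    (hU : IsCompact U) (hUs : IsCompact Us) (hUsconv : Convex ℝ Us)
    (hUsint : Us ⊆ interior U)
    (hQ : Q.PosDef) (hR : R.PosDef) (hS : S.PosDef)
    (hf0 : ContDiff ℝ 2 f0) (hh0 : ContDiff ℝ 2 h0)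
    (σs : ℝ) (hσs : 0 < σs) (hA2 : A2holds f0 h0 B D σs)
    (μ : ℝ) (hμ : 0 < μ) (hA3 : A3holds f0 B μ)
    -- optimal reachable steady state of the linearization at each point
    (xsrlin : (Fin n → ℝ) → Fin n → ℝ) (usrlin : (Fin n → ℝ) → Fin m → ℝ)
    (hxsrlin : ∀ xt : Fin n → ℝ, (xsrlin xt, usrlin xt) ∈ Zlin f0 B Us xt ∧
      ∀ z ∈ Zlin f0 B Us xt,
        qn S (hlin h0 D xt (xsrlin xt) (usrlin xt) - yr) ≤
          qn S (hlin h0 D xt z.1 z.2 - yr)) :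
    ∀ X : Set (Fin n → ℝ), IsCompact X →
      ∃ cu δ : ℝ, 0 < cu ∧ 0 < δ ∧
        ∀ xt ∈ X, en (xt - xsrlin xt) ≤ δ →
          MPCfeasible f0 h0 B D U Us N xt ∧
          Vfun f0 h0 B D U Us Q R S yr N xt ≤ cu * en (xt - xsrlin xt) ^ 2 ∧
          ∃ (xb : ℕ → Fin n → ℝ) (ub : ℕ → Fin m → ℝ) (xs : Fin n → ℝ)
            (us : Fin m → ℝ) (ys : Fin p → ℝ),
            MPCfeas f0 h0 B D U Us N xt xb ub xs us ys ∧
            MPCcost Q R S yr N xb ub xs us ys ≤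
              Jeqlin f0 h0 B D Us S yr xt + cu * en (xt - xsrlin xt) ^ 2 :=
  stmt4_general N hN f0 h0 B D U Us yr Q R S hUs hUsint hQ hR hS hf0 μ hμ hA3 xsrlin usrlin hxsrlin
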